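/- arXiv:2102.13202 — 2 statements merged into one kernel-verified Lean document; each statement's English description precedes it below -/
import Mathlib

section
/- Let (M_n)_{n≥0} be a martingale with respect to a filtration (F_n)_{n≥0} with M_0 = 0, whose differences satisfy |M_i − M_{i−1}| ≤ c almost surely and E[(M_i − M_{i−1})^2 | F_{i−1}] ≤ v almost surely for all i ≥ 1, where c > 0 and v ≥ 0 are constants. Then for every n ≥ 1 and every x > 0, P(M_n ≥ x) ≤ exp(−x^2 / (2 n (c^2 + v))). -/
open MeasureTheory

private lemma stmt_1_exp_le_interp {a y : ℝ} (ha : 0 < a) (hy : |y| ≤ a) :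
    Real.exp y ≤ Real.cosh a + (y / a) * Real.sinh a := by
  obtain ⟨hy1, hy2⟩ := abs_le.1 hy
  have h1 : 0 ≤ (a + y) / (2 * a) := div_nonneg (by linarith) (by linarith)
  have h2 : 0 ≤ (a - y) / (2 * a) := div_nonneg (by linarith) (by linarith)
  have hsum : (a + y) / (2 * a) + (a - y) / (2 * a) = 1 := by
    field_simp
    ring
  have hkey := convexOn_exp.2 (Set.mem_univ a) (Set.mem_univ (-a)) h1 h2 hsum
  have hcomb : (a + y) / (2 * a) * a + (a - y) / (2 * a) * (-a) = y := by
    rw [div_mul_eq_mul_div, div_mul_eq_mul_div, ← add_div,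
      div_eq_iff (by positivity : (2 : ℝ) * a ≠ 0)]
    ring
  simp only [smul_eq_mul] at hkey
  rw [hcomb] at hkey
  calc Real.exp y ≤ (a + y) / (2 * a) * Real.exp a + (a - y) / (2 * a) * Real.exp (-a) := hkey
    _ = Real.cosh a + (y / a) * Real.sinh a := by
        rw [Real.cosh_eq, Real.sinh_eq]
        field_simp
        ring

/-- Azuma–Bernstein style bound: for a martingale `M` with `M 0 = 0`, increments bounded
in absolute value by `c` a.s., and conditional second moments of increments bounded by `v`
a.s., we have `P(M n ≥ x) ≤ exp (-x² / (2 n (c² + v)))`. -/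
theorem stmt_1 {Ω : Type*} {m0 : MeasurableSpace Ω} {μ : Measure Ω} [IsProbabilityMeasure μ]
    (ℱ : Filtration ℕ m0) (M : ℕ → Ω → ℝ)
    (hM : Martingale M ℱ μ) (h0 : M 0 = 0)
    (c v : ℝ) (hc : 0 < c) (hv : 0 ≤ v)
    (hbdd : ∀ i : ℕ, ∀ᵐ ω ∂μ, |M (i + 1) ω - M i ω| ≤ c)
    (hvar : ∀ i : ℕ, ∀ᵐ ω ∂μ,
      (μ[fun ω' => (M (i + 1) ω' - M i ω') ^ 2 | ℱ i]) ω ≤ v)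
    (n : ℕ) (hn : 1 ≤ n) (x : ℝ) (hx : 0 < x) :
    μ {ω | x ≤ M n ω} ≤ ENNReal.ofReal (Real.exp (-x ^ 2 / (2 * n * (c ^ 2 + v)))) := by
  have hnpos : (0 : ℝ) < n := by exact_mod_cast hn
  set t : ℝ := x / (n * c ^ 2) with ht_def
  have ht : 0 < t := div_pos hx (mul_pos hnpos (pow_pos hc 2))
  -- measurability of M i
  have hMeas : ∀ i, Measurable (M i) :=
    fun i => ((hM.stronglyAdapted i).mono (ℱ.le i)).measurable
  -- a.s. bound |M i| ≤ i * c
  have hMbdd : ∀ i : ℕ, ∀ᵐ ω ∂μ, |M i ω| ≤ i * c := by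
    intro i
    induction i with
    | zero => filter_upwards with ω; simp [h0]
    | succ i ih =>
      filter_upwards [ih, hbdd i] with ω h1 h2
      have h3 : |M (i + 1) ω| ≤ |M i ω| + |M (i + 1) ω - M i ω| := by
        have := abs_add_le (M i ω) (M (i + 1) ω - M i ω)
        simpa using this
      push_cast
      linarith
  -- integrability of exp (s * M i)
  have hint : ∀ (s : ℝ) (i : ℕ), Integrable (fun ω => Real.exp (s * M i ω)) μ := by
    intro s i
    refine (integrable_const (Real.exp (|s| * (i * c)))).mono'
      (Real.measurable_exp.comp (measurable_const.mul (hMeas i))).aestronglyMeasurable ?_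
    filter_upwards [hMbdd i] with ω hω
    rw [Real.norm_eq_abs, abs_of_pos (Real.exp_pos _), Real.exp_le_exp]
    calc s * M i ω ≤ |s * M i ω| := le_abs_self _
      _ = |s| * |M i ω| := abs_mul _ _
      _ ≤ |s| * (i * c) := mul_le_mul_of_nonneg_left hω (abs_nonneg s)
  -- integrability of exp (t * M i) * Δ
  have hprodint : ∀ i : ℕ,
      Integrable (fun ω => Real.exp (t * M i ω) * (M (i + 1) ω - M i ω)) μ := by
    intro i
    refine (integrable_const (Real.exp (|t| * (i * c)) * c)).mono'
      ((Real.measurable_exp.comp (measurable_const.mul (hMeas i))).mul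
        ((hMeas (i + 1)).sub (hMeas i))).aestronglyMeasurable ?_
    filter_upwards [hMbdd i, hbdd i] with ω h1 h2
    rw [Real.norm_eq_abs, abs_mul, abs_of_pos (Real.exp_pos _)]
    have hexp : Real.exp (t * M i ω) ≤ Real.exp (|t| * (i * c)) := by
      rw [Real.exp_le_exp]
      calc t * M i ω ≤ |t * M i ω| := le_abs_self _
        _ = |t| * |M i ω| := abs_mul _ _
        _ ≤ |t| * (i * c) := mul_le_mul_of_nonneg_left h1 (abs_nonneg t)
    exact mul_le_mul hexp h2 (abs_nonneg _) (Real.exp_pos _).le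
  -- the increment has zero conditional mean, so the product integrates to 0
  have hzero : ∀ i : ℕ,
      ∫ ω, Real.exp (t * M i ω) * (M (i + 1) ω - M i ω) ∂μ = 0 := by
    intro i
    have hfmeas : StronglyMeasurable[ℱ i] (fun ω => Real.exp (t * M i ω)) :=
      Real.continuous_exp.comp_stronglyMeasurable ((hM.stronglyAdapted i).const_mul t)
    have hΔint : Integrable (fun ω => M (i + 1) ω - M i ω) μ :=
      (hM.integrable (i + 1)).sub (hM.integrable i)
    have hcond := condExp_mul_of_stronglyMeasurable_left (m := ℱ i) (μ := μ)
      (g := fun ω => M (i + 1) ω - M i ω) hfmeas (hprodint i) hΔint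
    have hΔ0 : μ[fun ω => M (i + 1) ω - M i ω|ℱ i] =ᵐ[μ] 0 := by
      have hs : μ[fun ω => M (i + 1) ω - M i ω|ℱ i] =ᵐ[μ] μ[M (i + 1)|ℱ i] - μ[M i|ℱ i] :=
        condExp_sub (hM.integrable (i + 1)) (hM.integrable i) _
      have h1 : μ[M (i + 1)|ℱ i] =ᵐ[μ] M i := hM.condExp_ae_eq (Nat.le_succ i)
      have h2 : μ[M i|ℱ i] =ᵐ[μ] M i := hM.condExp_ae_eq le_rfl
      filter_upwards [hs, h1, h2] with ω hω h1ω h2ω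
      simp only [Pi.sub_apply] at hω h1ω h2ω ⊢
      simp [hω, h1ω, h2ω]
    have hc0 : μ[(fun ω => Real.exp (t * M i ω)) * (fun ω => M (i + 1) ω - M i ω)|ℱ i]
        =ᵐ[μ] 0 := by
      refine hcond.trans ?_
      filter_upwards [hΔ0] with ω hω
      simp only [Pi.mul_apply, Pi.zero_apply] at hω ⊢
      simp [hω]
    calc ∫ ω, Real.exp (t * M i ω) * (M (i + 1) ω - M i ω) ∂μ
        = ∫ ω, (μ[(fun ω => Real.exp (t * M i ω)) * (fun ω => M (i + 1) ω - M i ω)|ℱ i]) ω ∂μ :=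
          (integral_condExp (ℱ.le i)).symm
      _ = 0 := by rw [integral_congr_ae hc0]; simp
  -- induction: mgf bound
  have hrec : ∀ i : ℕ, ∫ ω, Real.exp (t * M i ω) ∂μ ≤ Real.cosh (t * c) ^ i := by
    intro i
    induction i with
    | zero => simp [h0]
    | succ i ih =>
      have hpt : ∀ᵐ ω ∂μ, Real.exp (t * M (i + 1) ω) ≤
          Real.cosh (t * c) * Real.exp (t * M i ω) +
          (Real.sinh (t * c) / c) * (Real.exp (t * M i ω) * (M (i + 1) ω - M i ω)) := by
        filter_upwards [hbdd i] with ω hω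
        have habs : |t * (M (i + 1) ω - M i ω)| ≤ t * c := by
          rw [abs_mul, abs_of_pos ht]
          exact mul_le_mul_of_nonneg_left hω ht.le
        have h1 := stmt_1_exp_le_interp (mul_pos ht hc) habs
        have h3 : t * (M (i + 1) ω - M i ω) / (t * c) = (M (i + 1) ω - M i ω) / c :=
          mul_div_mul_left _ _ (ne_of_gt ht)
        rw [h3] at h1
        have h2 : Real.exp (t * M (i + 1) ω)
            = Real.exp (t * M i ω) * Real.exp (t * (M (i + 1) ω - M i ω)) := by
          rw [← Real.exp_add]; ring_nf
        rw [h2]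
        have h4 := mul_le_mul_of_nonneg_left h1 (Real.exp_pos (t * M i ω)).le
        calc Real.exp (t * M i ω) * Real.exp (t * (M (i + 1) ω - M i ω))
            ≤ Real.exp (t * M i ω) *
              (Real.cosh (t * c) + (M (i + 1) ω - M i ω) / c * Real.sinh (t * c)) := h4
          _ = Real.cosh (t * c) * Real.exp (t * M i ω) +
              (Real.sinh (t * c) / c) * (Real.exp (t * M i ω) * (M (i + 1) ω - M i ω)) := by
            field_simp
      have hintR : Integrable (fun ω =>
          Real.cosh (t * c) * Real.exp (t * M i ω) +
          (Real.sinh (t * c) / c) * (Real.exp (t * M i ω) * (M (i + 1) ω - M i ω))) μ :=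
        ((hint t i).const_mul _).add ((hprodint i).const_mul _)
      calc ∫ ω, Real.exp (t * M (i + 1) ω) ∂μ
          ≤ ∫ ω, (Real.cosh (t * c) * Real.exp (t * M i ω) +
              (Real.sinh (t * c) / c) * (Real.exp (t * M i ω) * (M (i + 1) ω - M i ω))) ∂μ :=
            integral_mono_ae (hint t (i + 1)) hintR hpt
        _ = Real.cosh (t * c) * ∫ ω, Real.exp (t * M i ω) ∂μ +
            (Real.sinh (t * c) / c) *
              ∫ ω, Real.exp (t * M i ω) * (M (i + 1) ω - M i ω) ∂μ := by
            rw [integral_add ((hint t i).const_mul _) ((hprodint i).const_mul _),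
              integral_const_mul, integral_const_mul]
        _ = Real.cosh (t * c) * ∫ ω, Real.exp (t * M i ω) ∂μ := by
            rw [hzero i]; ring
        _ ≤ Real.cosh (t * c) * Real.cosh (t * c) ^ i :=
            mul_le_mul_of_nonneg_left ih (Real.cosh_pos _).le
        _ = Real.cosh (t * c) ^ (i + 1) := by rw [pow_succ]; ring
  -- Chernoff bound
  have hchern := ProbabilityTheory.measure_ge_le_exp_mul_mgf (μ := μ) (X := M n) x ht.le
    (hint t n)
  have hmgf : ProbabilityTheory.mgf (M n) μ t ≤ Real.exp (↑n * (t * c) ^ 2 / 2) := by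
    calc ProbabilityTheory.mgf (M n) μ t ≤ Real.cosh (t * c) ^ n := hrec n
      _ ≤ Real.exp ((t * c) ^ 2 / 2) ^ n := by
          exact pow_le_pow_left₀ (Real.cosh_pos _).le (Real.cosh_le_exp_half_sq _) n
      _ = Real.exp (↑n * (t * c) ^ 2 / 2) := by
          rw [← Real.exp_nat_mul]; ring_nf
  have hc2 : (n : ℝ) * c ^ 2 ≠ 0 := by positivity
  have hfinal : (μ {ω | x ≤ M n ω}).toReal ≤
      Real.exp (-x ^ 2 / (2 * n * (c ^ 2 + v))) := by
    calc (μ {ω | x ≤ M n ω}).toReal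
        ≤ Real.exp (-t * x) * ProbabilityTheory.mgf (M n) μ t := hchern
      _ ≤ Real.exp (-t * x) * Real.exp (↑n * (t * c) ^ 2 / 2) :=
          mul_le_mul_of_nonneg_left hmgf (Real.exp_pos _).le
      _ = Real.exp (-t * x + ↑n * (t * c) ^ 2 / 2) := (Real.exp_add _ _).symm
      _ = Real.exp (-x ^ 2 / (2 * n * c ^ 2)) := by
          congr 1
          rw [ht_def]
          field_simp
          ring
      _ ≤ Real.exp (-x ^ 2 / (2 * n * (c ^ 2 + v))) := by
          rw [Real.exp_le_exp, neg_div, neg_div, neg_le_neg_iff]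
          exact div_le_div_of_nonneg_left (by positivity) (by positivity) (by nlinarith)
  rw [← ENNReal.ofReal_toReal (measure_ne_top μ _)]
  exact ENNReal.ofReal_le_ofReal hfinal
end

section
/- Let (Ω, F, P) be a probability space, G ⊆ F a sub-σ-algebra, A ∈ F an event, and γ > 0. Let π be a G-measurable random variable with γ ≤ π ≤ 1 almost surely, let X be an integrable G-measurable random variable, and let R be a bounded random variable satisfying P(A | G) = π almost surely and E[1_A · R | G] = π·μ almost surely for a real constant μ. Then E[ X + 1_A (R − X)/π | G ] = μ almost surely. -/
open MeasureTheory

open MeasureTheory in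
private lemma indicator_integrable_aux {Ω : Type*} {F : MeasurableSpace Ω} {P : Measure Ω}
    {f : Ω → ℝ} {A : Set Ω} (hf : Integrable f P) (hA : MeasurableSet[F] A) :
    Integrable (A.indicator f) P :=
  hf.indicator hA

/-- Conditional unbiasedness of the doubly-robust score `X + 1_A (R − X)/π`:
if `P(A | G) = π` and `E[1_A R | G] = π μ` a.s., then
`E[X + 1_A (R − X)/π | G] = μ` a.s. -/
theorem stmt_5 {Ω : Type*} {m : MeasurableSpace Ω} {F : MeasurableSpace Ω} {P : Measure Ω} [IsProbabilityMeasure P]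
    (hm : m ≤ F)
    (A : Set Ω) (hA : MeasurableSet A) (γ : ℝ) (hγ : 0 < γ)
    (π X R : Ω → ℝ) (μ0 : ℝ)
    (hπm : StronglyMeasurable[m] π)
    (hπγ : ∀ᵐ ω ∂P, γ ≤ π ω) (hπ1 : ∀ᵐ ω ∂P, π ω ≤ 1)
    (hXm : StronglyMeasurable[m] X) (hXint : Integrable X P)
    (hRb : ∃ C, ∀ ω, |R ω| ≤ C)
    (hcondA : P[A.indicator (fun _ => (1 : ℝ)) | m] =ᵐ[P] π)
    (hR1 : P[fun ω => A.indicator (fun _ => (1 : ℝ)) ω * R ω | m]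
      =ᵐ[P] fun ω => π ω * μ0) :
    P[fun ω => X ω + A.indicator (fun _ => (1 : ℝ)) ω * (R ω - X ω) / π ω | m]
      =ᵐ[P] fun _ => μ0 := by
  set I : Ω → ℝ := A.indicator (fun _ => (1 : ℝ)) with hI
  have hIint : Integrable I P := indicator_integrable_aux (integrable_const (1 : ℝ)) hA
  have hIXeq : (fun ω => I ω * X ω) = A.indicator X := by
    funext ω
    by_cases h : ω ∈ A <;> simp [hI, Set.indicator_apply, h]
  have hIXint : Integrable (fun ω => I ω * X ω) P := by
    rw [hIXeq]; exact indicator_integrable_aux hXint hA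
  have hπinv_m : StronglyMeasurable[m] (fun ω => (π ω)⁻¹) :=
    (hπm.measurable.inv).stronglyMeasurable
  have hπF : StronglyMeasurable[F] π := hπm.mono hm
  have hπinv_meas : AEStronglyMeasurable[F] (fun ω => (π ω)⁻¹) P :=
    (hπF.measurable.inv).stronglyMeasurable.aestronglyMeasurable
  have hπinv_bdd : ∀ᵐ ω ∂P, ‖(π ω)⁻¹‖ ≤ γ⁻¹ := by
    filter_upwards [hπγ] with ω hω
    have hπpos : 0 < π ω := lt_of_lt_of_le hγ hω
    rw [Real.norm_eq_abs, abs_of_pos (inv_pos.mpr hπpos)]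
    exact inv_anti₀ hγ hω
  by_cases hIR : Integrable (fun ω => I ω * R ω) P
  · -- main case: `1_A R` is integrable
    have h1 : Integrable (fun ω => (π ω)⁻¹ * (I ω * R ω)) P :=
      hIR.bdd_mul hπinv_meas hπinv_bdd
    have h2 : Integrable (fun ω => (π ω)⁻¹ * (I ω * X ω)) P :=
      hIXint.bdd_mul hπinv_meas hπinv_bdd
    have hfeq : (fun ω => X ω + I ω * (R ω - X ω) / π ω)
        = fun ω => X ω + ((π ω)⁻¹ * (I ω * R ω) - (π ω)⁻¹ * (I ω * X ω)) := by
      funext ω; rw [div_eq_mul_inv]; ring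
    rw [hfeq]
    have hadd := condExp_add (μ := P) (m := m) hXint (h1.sub h2)
    refine hadd.trans ?_
    have hsub := condExp_sub (μ := P) (m := m) h1 h2
    have hX : P[X | m] =ᵐ[P] X :=
      (condExp_of_stronglyMeasurable hm hXm hXint).symm ▸ Filter.EventuallyEq.rfl
    have hp1 : P[fun ω => (π ω)⁻¹ * (I ω * R ω) | m]
        =ᵐ[P] fun ω => (π ω)⁻¹ * (P[fun ω => I ω * R ω | m]) ω :=
      condExp_mul_of_stronglyMeasurable_left (μ := P) hπinv_m h1 hIR
    have hp2 : P[fun ω => (π ω)⁻¹ * (I ω * X ω) | m]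
        =ᵐ[P] fun ω => (π ω)⁻¹ * (P[fun ω => I ω * X ω | m]) ω :=
      condExp_mul_of_stronglyMeasurable_left (μ := P) hπinv_m h2 hIXint
    have hXI : P[fun ω => I ω * X ω | m] =ᵐ[P] fun ω => X ω * π ω := by
      have heq : (fun ω => I ω * X ω) = fun ω => X ω * I ω := by
        funext ω; ring
      have hXIint : Integrable (fun ω => X ω * I ω) P := heq ▸ hIXint
      have h := condExp_mul_of_stronglyMeasurable_left (μ := P) hXm hXIint hIint
      rw [heq]
      refine h.trans ?_
      filter_upwards [hcondA] with ω hω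
      simp [hω]
    -- combine everything
    have hcondX : P[X | m] = X := condExp_of_stronglyMeasurable hm hXm hXint
    filter_upwards [hsub, hp1, hp2, hXI, hR1, hπγ] with ω hsubω hp1ω hp2ω hXIω hR1ω hγω
    have hπne : π ω ≠ 0 := ne_of_gt (lt_of_lt_of_le hγ hγω)
    simp only [Pi.add_apply, Pi.sub_apply] at *
    rw [hcondX, hsubω, hp1ω, hp2ω, hXIω, hR1ω]
    field_simp
    ring
  · -- degenerate case: `1_A R` is not integrable, so both sides are forced
    have hzero : P[fun ω => I ω * R ω | m] = 0 := condExp_of_not_integrable hIR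
    have hμ0 : μ0 = 0 := by
      have h0 : (fun ω => π ω * μ0) =ᵐ[P] (0 : Ω → ℝ) := (hzero ▸ hR1).symm
      by_contra hμ0ne
      have : ∀ᵐ ω ∂P, False := by
        filter_upwards [h0, hπγ] with ω h0ω hγω
        have hπne : π ω ≠ 0 := ne_of_gt (lt_of_lt_of_le hγ hγω)
        exact hμ0ne (by simpa [hπne] using h0ω)
      simpa using this.frequently.exists
    have hfnint : ¬ Integrable (fun ω => X ω + I ω * (R ω - X ω) / π ω) P := by
      intro hf
      apply hIR
      have hd : Integrable (fun ω => I ω * (R ω - X ω) / π ω) P := by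
        refine (hf.sub hXint).congr (Filter.Eventually.of_forall fun ω => ?_)
        simp
      have hπbdd : ∀ᵐ ω ∂P, ‖π ω‖ ≤ 1 := by
        filter_upwards [hπγ, hπ1] with ω h1ω h2ω
        rw [Real.norm_eq_abs, abs_of_pos (lt_of_lt_of_le hγ h1ω)]
        exact h2ω
      have hmul : Integrable (fun ω => π ω * (I ω * (R ω - X ω) / π ω)) P :=
        hd.bdd_mul hπF.aestronglyMeasurable hπbdd
      have heq : (fun ω => π ω * (I ω * (R ω - X ω) / π ω))
          =ᵐ[P] fun ω => I ω * R ω - I ω * X ω := by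
        filter_upwards [hπγ] with ω hγω
        have hπne : π ω ≠ 0 := ne_of_gt (lt_of_lt_of_le hγ hγω)
        field_simp
      have : Integrable (fun ω => I ω * R ω - I ω * X ω) P := hmul.congr heq
      exact (this.add hIXint).congr (Filter.Eventually.of_forall fun ω => by simp)
    rw [condExp_of_not_integrable hfnint, hμ0]
    rfl
end
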